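/- Let X be a space with Property (T), and let X_0 be a coarse component of X, equipped with the restricted metric (so that X_0 is itself a bounded geometry, monogenic, coarsely connected metric space). Then X_0 has Property (T). -/

import Mathlib

open scoped ENNReal Classical

noncomputable section

namespace GeomPropT

variable {X : Type*}

/-- The tube of diameter `R` in `X × X`. -/
def Tube (X : Type*) [EMetricSpace X] (R : ℝ≥0∞) : Set (X × X) :=
  {p : X × X | edist p.1 p.2 ≤ R}

/-- A subset of `X × X` is controlled if it is contained in a tube of finite diameter. -/
def Controlled [EMetricSpace X] (E : Set (X × X)) : Prop :=
  ∃ R : ℝ≥0∞, R < ⊤ ∧ E ⊆ Tube X R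

/-- `X` has bounded geometry if balls of any given finite radius have uniformly
bounded cardinality. -/
def BoundedGeometry (X : Type*) [EMetricSpace X] : Prop :=
  ∀ R : ℝ≥0∞, R < ⊤ → ∃ N : ℕ, ∀ x : X,
    {y : X | edist x y ≤ R}.Finite ∧ {y : X | edist x y ≤ R}.ncard ≤ N

/-- Composition of subsets of `X × X`. -/
def compRel (E F : Set (X × X)) : Set (X × X) :=
  {p : X × X | ∃ z : X, (p.1, z) ∈ E ∧ (z, p.2) ∈ F}

/-- `compPow E n` is the `(n+1)`-fold composition `E^{∘(n+1)}`. -/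
def compPow (E : Set (X × X)) : ℕ → Set (X × X)
  | 0 => E
  | n + 1 => compRel E (compPow E n)

/-- A controlled set is generating if every controlled set is contained in some
iterated composition of it. -/
def Generating [EMetricSpace X] (E : Set (X × X)) : Prop :=
  Controlled E ∧ ∀ F : Set (X × X), Controlled F → ∃ n : ℕ, F ⊆ compPow E n

/-- `X` is monogenic if it admits a controlled generating set. -/
def Monogenic (X : Type*) [EMetricSpace X] : Prop :=
  ∃ E : Set (X × X), Generating E

/-- A "space": bounded geometry, monogenic, with at most countably many coarse
components. -/
structure IsSpace (X : Type*) [EMetricSpace X] : Prop where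
  boundedGeometry : BoundedGeometry X
  monogenic : Monogenic X
  countableComponents : Set.Countable {C : Set X | ∃ x : X, C = {y : X | edist x y < ⊤}}

/-- The support of a matrix. -/
def matSupport (T : X → X → ℂ) : Set (X × X) := {p : X × X | T p.1 p.2 ≠ 0}

/-- Membership in `ℂ_u[X]`: uniformly bounded entries and controlled support. -/
def CuElem [EMetricSpace X] (T : X → X → ℂ) : Prop :=
  (∃ M : ℝ, ∀ x y : X, ‖T x y‖ ≤ M) ∧ Controlled (matSupport T)

/-- The identity matrix. -/
def matOne : X → X → ℂ := fun x y => if x = y then 1 else 0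

/-- Matrix multiplication. -/
def matMul (T S : X → X → ℂ) : X → X → ℂ := fun x y => ∑' z : X, T x z * S z y

/-- Matrix adjoint. -/
def matStar (T : X → X → ℂ) : X → X → ℂ := fun x y => starRingEnd ℂ (T y x)

/-- Matrix powers. -/
def matPow (A : X → X → ℂ) : ℕ → X → X → ℂ
  | 0 => matOne
  | n + 1 => matMul A (matPow A n)

/-- A function `f ∈ ℓ∞(X)` viewed as a diagonal matrix. -/
def diag (f : X → ℂ) : X → X → ℂ := fun x y => if x = y then f x else 0

/-- The matrix of a partial translation: a `{0,1}`-matrix with at most one `1` in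
each row and each column, and controlled support. -/
def IsPartialTranslation [EMetricSpace X] (v : X → X → ℂ) : Prop :=
  (∀ x y : X, v x y = 0 ∨ v x y = 1) ∧
  (∀ x y y' : X, v x y = 1 → v x y' = 1 → y = y') ∧
  (∀ x x' y : X, v x y = 1 → v x' y = 1 → x = x') ∧
  Controlled (matSupport v)

/-- Membership in `S_X`: finite propagation permutation matrices. -/
def IsPermMatrix [EMetricSpace X] (A : X → X → ℂ) : Prop :=
  (∀ x y : X, A x y = 0 ∨ A x y = 1) ∧
  (∀ x : X, ∃! y : X, A x y = 1) ∧
  (∀ y : X, ∃! x : X, A x y = 1) ∧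
  Controlled (matSupport A)

/-- Membership in `A_X` with common row/column sum `c`. -/
def MemAX [EMetricSpace X] (A : X → X → ℂ) (c : ℂ) : Prop :=
  CuElem A ∧ ∀ x : X, HasSum (fun y => A x y) c ∧ HasSum (fun y => A y x) c

variable {H : Type*} [NormedAddCommGroup H] [InnerProductSpace ℂ H]

/-- A representation of `ℂ_u[X]`: a unital `*`-homomorphism into `B(H)`. -/
structure IsRepresentation [EMetricSpace X] [CompleteSpace H]
    (π : (X → X → ℂ) → (H →L[ℂ] H)) : Prop where
  map_one : π matOne = 1
  map_add : ∀ T S : X → X → ℂ, CuElem T → CuElem S → π (T + S) = π T + π S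
  map_smul : ∀ (c : ℂ) (T : X → X → ℂ), CuElem T → π (c • T) = c • π T
  map_mul : ∀ T S : X → X → ℂ, CuElem T → CuElem S → π (matMul T S) = π T * π S
  map_star : ∀ T : X → X → ℂ, CuElem T → π (matStar T) = ContinuousLinearMap.adjoint (π T)

/-- The subspace `H^π` of invariant vectors. -/
def invariantSubmodule [EMetricSpace X] (π : (X → X → ℂ) → (H →L[ℂ] H)) :
    Submodule ℂ H where
  carrier := {ξ : H | ∀ v : X → X → ℂ, IsPartialTranslation v →
    π v ξ = π (matMul v (matStar v)) ξ}
  add_mem' := by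
    intro a b ha hb v hv
    simp only [map_add, ha v hv, hb v hv]
  zero_mem' := by
    intro v hv
    simp
  smul_mem' := by
    intro c ξ hξ v hv
    simp only [map_smul, hξ v hv]

/-- `p` is the orthogonal projection onto `S`. -/
def IsOrthoProjOnto (p : H →L[ℂ] H) (S : Submodule ℂ H) : Prop :=
  ∀ ξ : H, p ξ ∈ S ∧ ξ - p ξ ∈ Sᗮ

/-- Geometric Property (T). -/
def HasPropertyT (X : Type*) [EMetricSpace X] : Prop :=
  ∀ E : Set (X × X), Generating E →
    ∃ c : ℝ, 0 < c ∧
      ∀ (H : Type) [NormedAddCommGroup H] [InnerProductSpace ℂ H] [CompleteSpace H]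
        (π : (X → X → ℂ) → (H →L[ℂ] H)), IsRepresentation π →
        ∀ ξ ∈ (invariantSubmodule π)ᗮ,
          ∃ v : X → X → ℂ, IsPartialTranslation v ∧ matSupport v ⊆ E ∧
            c * ‖ξ‖ ≤ ‖π v ξ - π (matMul v (matStar v)) ξ‖

/-- Bounded functions (elements of `ℓ∞(X)`). -/
def BddFun (f : X → ℂ) : Prop := ∃ M : ℝ, ∀ x : X, ‖f x‖ ≤ M

/-- `f ∘ t`, extended by `0`, where `t` is the partial translation with matrix `v`. -/
def translateFun (v : X → X → ℂ) (f : X → ℂ) : X → ℂ := fun y => ∑' x : X, v x y * f x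

/-- An invariant mean on `ℓ∞(X)`: a positive unital linear functional invariant
under partial translations. -/
def IsInvariantMean [EMetricSpace X] (φ : (X → ℂ) → ℂ) : Prop :=
  (∀ f g : X → ℂ, BddFun f → BddFun g → φ (f + g) = φ f + φ g) ∧
  (∀ (c : ℂ) (f : X → ℂ), BddFun f → φ (c • f) = c * φ f) ∧
  φ (fun _ => 1) = 1 ∧
  (∀ f : X → ℂ, BddFun f → (∀ x, 0 ≤ (f x).re ∧ (f x).im = 0) →
    0 ≤ (φ f).re ∧ (φ f).im = 0) ∧
  (∀ f : X → ℂ, BddFun f → ∀ v : X → X → ℂ, IsPartialTranslation v →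
    (∀ x : X, f x ≠ 0 → ∃ y : X, v x y = 1) → φ (translateFun v f) = φ f)

/-- `X` is amenable if `ℓ∞(X)` admits an invariant mean. -/
def IsAmenable (X : Type*) [EMetricSpace X] : Prop :=
  ∃ φ : (X → ℂ) → ℂ, IsInvariantMean φ

/-- A representation of `ℂ_u[X]` bundled with its Hilbert space. -/
structure HilbertRep (X : Type*) [EMetricSpace X] where
  H : Type
  [nacg : NormedAddCommGroup H]
  [ips : InnerProductSpace ℂ H]
  [cs : CompleteSpace H]
  π : (X → X → ℂ) → (H →L[ℂ] H)
  rep : IsRepresentation π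

attribute [instance] HilbertRep.nacg HilbertRep.ips HilbertRep.cs

/-! Restricting matrices to the coarse component `X₀` of `x₀` is a `*`-homomorphism
`ℂ_u[X] → ℂ_u[X₀]`, since a controlled matrix has no entries between different components.
Composing a representation of `ℂ_u[X₀]` with it gives a representation of `ℂ_u[X]` with the
same invariant vectors (partial translations of `X₀` extend by zero to `X`). A generating set
`E` of `X₀` is enlarged to a generating set `E'` of `X` by the diagonal and by a generating set
of `X` off `X₀`; Property (T) of `X` for `E'` yields a partial translation supported in `E'`
whose restriction to `X₀`, with its diagonal removed, is supported in `E` and moves `ξ` just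
as much. -/

section PartialTranslation

variable {Z : Type*}

def offDiag (v : Z → Z → ℂ) : Z → Z → ℂ := fun x y => if x = y then 0 else v x y

lemma offDiag_eq_one_iff {v : Z → Z → ℂ} {x y : Z} :
    offDiag v x y = 1 ↔ x ≠ y ∧ v x y = 1 := by
  by_cases h : x = y <;> simp [offDiag, h]

lemma offDiag_add_diag (v : Z → Z → ℂ) : offDiag v + diag (fun x => v x x) = v := by
  funext x y
  by_cases h : x = y <;> simp [offDiag, diag, h]

lemma matSupport_offDiag (v : Z → Z → ℂ) :
    matSupport (offDiag v) = matSupport v \ Set.diagonal Z := by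
  ext p
  by_cases h : p.1 = p.2 <;> simp [matSupport, offDiag, h]

lemma cuElem_diag [EMetricSpace Z] {f : Z → ℂ} (hf : BddFun f) : CuElem (diag f) := by
  obtain ⟨M, hM⟩ := hf
  refine ⟨⟨max M 0, fun x y => ?_⟩, 0, ENNReal.zero_lt_top, fun p hp => ?_⟩
  · by_cases h : x = y
    · simpa [diag, h] using (hM y).trans (le_max_left M 0)
    · simp [diag, h]
  · by_cases h : p.1 = p.2
    · simp [Tube, h]
    · simp [matSupport, diag, h] at hp

variable [EMetricSpace Z] {v : Z → Z → ℂ}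

namespace IsPartialTranslation

lemma eq_zero_of_ne_one (hv : IsPartialTranslation v) {x y : Z} (h : v x y ≠ 1) : v x y = 0 :=
  (hv.1 x y).resolve_right h

lemma norm_le_one (hv : IsPartialTranslation v) (x y : Z) : ‖v x y‖ ≤ 1 := by
  rcases hv.1 x y with h | h <;> simp [h]

lemma cuElem (hv : IsPartialTranslation v) : CuElem v :=
  ⟨⟨1, hv.norm_le_one⟩, hv.2.2.2⟩

lemma offDiag (hv : IsPartialTranslation v) : IsPartialTranslation (offDiag v) := by
  have hone : ∀ {x y}, GeomPropT.offDiag v x y = 1 → v x y = 1 := fun h =>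
    (offDiag_eq_one_iff.1 h).2
  refine ⟨fun x y => ?_, fun x y y' h h' => hv.2.1 x y y' (hone h) (hone h'),
    fun x x' y h h' => hv.2.2.1 x x' y (hone h) (hone h'), ?_⟩
  · by_cases hxy : x = y
    · simp [GeomPropT.offDiag, hxy]
    · simpa [GeomPropT.offDiag, hxy] using hv.1 x y
  · obtain ⟨R, hR, hsub⟩ := hv.2.2.2
    exact ⟨R, hR, (matSupport_offDiag v).subset.trans (Set.sdiff_subset.trans hsub)⟩

lemma matMul_matStar (hv : IsPartialTranslation v) :
    matMul v (matStar v) = diag (fun x => if ∃ y, v x y = 1 then 1 else 0) := by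
  funext x x'
  simp only [matMul, matStar, diag]
  by_cases hx : ∃ y, v x y = 1
  · obtain ⟨y, hy⟩ := hx
    rw [tsum_eq_single y fun z hz => by
      rw [hv.eq_zero_of_ne_one fun h => hz (hv.2.1 x z y h hy), zero_mul]]
    by_cases hxx' : x = x'
    · subst hxx'
      simp [hy, show ∃ y, v x y = 1 from ⟨y, hy⟩]
    · have : v x' y = 0 := hv.eq_zero_of_ne_one fun h => hxx' (hv.2.2.1 x x' y hy h)
      simp [hxx', this]
  · push Not at hx
    simp [hv.eq_zero_of_ne_one (hx _)]

lemma matMul_matStar_eq_offDiag_add_diag (hv : IsPartialTranslation v) :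
    matMul v (matStar v) =
      matMul (GeomPropT.offDiag v) (matStar (GeomPropT.offDiag v)) + diag (fun x => v x x) := by
  rw [hv.matMul_matStar, hv.offDiag.matMul_matStar]
  funext x x'
  by_cases hxx' : x = x'
  · subst hxx'
    rcases hv.1 x x with hxx | hxx
    · have : (∃ y, v x y = 1) ↔ ∃ y, GeomPropT.offDiag v x y = 1 := by
        simp only [offDiag_eq_one_iff]
        exact exists_congr fun y => ⟨fun h => ⟨fun e => by simp_all, h⟩, And.right⟩
      simp [diag, hxx, this]
    · have : ¬ ∃ y, GeomPropT.offDiag v x y = 1 := fun ⟨y, hy⟩ =>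
        (offDiag_eq_one_iff.1 hy).1 (hv.2.1 x x y hxx (offDiag_eq_one_iff.1 hy).2)
      simp [diag, hxx, this, show ∃ y, v x y = 1 from ⟨x, hxx⟩]
  · simp [diag, hxx']

end IsPartialTranslation

end PartialTranslation

lemma IsRepresentation.sub_eq_offDiag {Z : Type*} [EMetricSpace Z] {H : Type*}
    [NormedAddCommGroup H] [InnerProductSpace ℂ H] [CompleteSpace H]
    {π : (Z → Z → ℂ) → (H →L[ℂ] H)} (hπ : IsRepresentation π) {v : Z → Z → ℂ}
    (hv : IsPartialTranslation v) :
    π v - π (matMul v (matStar v)) =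
      π (offDiag v) - π (matMul (offDiag v) (matStar (offDiag v))) := by
  have hdiag : CuElem (diag fun x => v x x) := cuElem_diag ⟨1, fun x => hv.norm_le_one x x⟩
  have hproj : CuElem (matMul (offDiag v) (matStar (offDiag v))) := by
    rw [hv.offDiag.matMul_matStar]
    exact cuElem_diag ⟨1, fun x => by dsimp only; split_ifs <;> simp⟩
  have hsplit : π v = π (offDiag v) + π (diag fun x => v x x) := by
    conv_lhs => rw [← offDiag_add_diag v]
    exact hπ.map_add _ _ hv.offDiag.cuElem hdiag
  rw [hsplit, hv.matMul_matStar_eq_offDiag_add_diag, hπ.map_add _ _ hproj hdiag]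
  abel

section Controlled

variable [EMetricSpace X]

lemma Controlled.subset {E F : Set (X × X)} (hF : Controlled F) (h : E ⊆ F) : Controlled E :=
  let ⟨R, hR, hs⟩ := hF
  ⟨R, hR, h.trans hs⟩

lemma Controlled.union {E F : Set (X × X)} (hE : Controlled E) (hF : Controlled F) :
    Controlled (E ∪ F) := by
  obtain ⟨R, hR, hRs⟩ := hE
  obtain ⟨S, hS, hSs⟩ := hF
  refine ⟨max R S, max_lt hR hS, Set.union_subset ?_ ?_⟩
  · exact hRs.trans fun p (hp : edist p.1 p.2 ≤ R) => hp.trans (le_max_left R S)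
  · exact hSs.trans fun p (hp : edist p.1 p.2 ≤ S) => hp.trans (le_max_right R S)

lemma controlled_diagonal : Controlled (Set.diagonal X) :=
  ⟨0, ENNReal.zero_lt_top, fun p (hp : p.1 = p.2) => by simp [Tube, hp]⟩

lemma Controlled.edist_lt_top {E : Set (X × X)} (hE : Controlled E) {p : X × X} (hp : p ∈ E) :
    edist p.1 p.2 < ⊤ :=
  let ⟨_, hR, hs⟩ := hE
  (hs hp).trans_lt hR

end Controlled

section CompPow

variable {Y : Type*}

lemma compPow_mono {E F : Set (X × X)} (h : E ⊆ F) : ∀ n, compPow E n ⊆ compPow F n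
  | 0 => h
  | n + 1 => fun _ ⟨z, h₁, h₂⟩ => ⟨z, h h₁, compPow_mono h n h₂⟩

lemma compPow_mono_index {E : Set (X × X)} (hE : Set.diagonal X ⊆ E) {n m : ℕ} (h : n ≤ m) :
    compPow E n ⊆ compPow E m := by
  induction h with
  | refl => exact subset_rfl
  | step _ ih => exact fun p hp => ⟨p.1, hE rfl, ih hp⟩

lemma image_compPow_subset (f : Y → X) (E : Set (Y × Y)) :
    ∀ n, Prod.map f f '' compPow E n ⊆ compPow (Prod.map f f '' E) n
  | 0 => subset_rfl
  | n + 1 => by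
    rintro _ ⟨q, ⟨z, h₁, h₂⟩, rfl⟩
    exact ⟨f z, ⟨(q.1, z), h₁, rfl⟩, image_compPow_subset f E n ⟨(z, q.2), h₂, rfl⟩⟩

lemma compPow_subset_restrict {E : Set (X × X)} {S : Set X}
    (hS : ∀ q ∈ E, q.1 ∈ S → q.2 ∈ S) :
    ∀ n, ∀ p ∈ compPow E n, p.1 ∈ S → p ∈ compPow {q ∈ E | q.1 ∈ S} n
  | 0 => fun _ hp h => ⟨hp, h⟩
  | n + 1 => fun p ⟨z, h₁, h₂⟩ h =>
    ⟨z, ⟨h₁, h⟩, compPow_subset_restrict hS n (z, p.2) h₂ (hS _ h₁ h)⟩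

end CompPow

lemma Controlled.preimage_val [EMetricSpace X] {p : X → Prop} {E : Set (X × X)}
    (hE : Controlled E) :
    Controlled (Prod.map Subtype.val Subtype.val ⁻¹' E : Set (Subtype p × Subtype p)) :=
  let ⟨R, hR, hs⟩ := hE
  ⟨R, hR, fun _ hq => hs hq⟩

lemma Controlled.image_val [EMetricSpace X] {p : X → Prop} {E : Set (Subtype p × Subtype p)}
    (hE : Controlled E) : Controlled (Prod.map Subtype.val Subtype.val '' E) := by
  obtain ⟨R, hR, hs⟩ := hE
  exact ⟨R, hR, by rintro _ ⟨q, hq, rfl⟩; exact hs hq⟩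

section CoarseComponent

variable [EMetricSpace X] (x₀ : X)

abbrev CoarseComponent : Type _ := {y : X // edist x₀ y < ⊤}

variable {x₀}

lemma Controlled.edist_lt_top_iff {E : Set (X × X)} (hE : Controlled E) {p : X × X}
    (hp : p ∈ E) : edist x₀ p.1 < ⊤ ↔ edist x₀ p.2 < ⊤ := by
  have h₁₂ := hE.edist_lt_top hp
  have h₂₁ : edist p.2 p.1 < ⊤ := edist_comm p.1 p.2 ▸ h₁₂
  exact ⟨fun h => (edist_triangle _ _ _).trans_lt (ENNReal.add_lt_top.2 ⟨h, h₁₂⟩),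
    fun h => (edist_triangle _ _ _).trans_lt (ENNReal.add_lt_top.2 ⟨h, h₂₁⟩)⟩

variable (x₀)

def matRestrict (T : X → X → ℂ) : CoarseComponent x₀ → CoarseComponent x₀ → ℂ :=
  fun x y => T x y

def matExtendByZero (S : CoarseComponent x₀ → CoarseComponent x₀ → ℂ) : X → X → ℂ :=
  fun x y =>
    if h : edist x₀ x < ⊤ ∧ edist x₀ y < ⊤ then S ⟨x, h.1⟩ ⟨y, h.2⟩ else 0

variable {x₀}

lemma matSupport_matRestrict (T : X → X → ℂ) :
    matSupport (matRestrict x₀ T) = Prod.map Subtype.val Subtype.val ⁻¹' matSupport T :=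
  rfl

lemma CuElem.matRestrict {T : X → X → ℂ} (hT : CuElem T) : CuElem (matRestrict x₀ T) :=
  let ⟨⟨M, hM⟩, hc⟩ := hT
  ⟨⟨M, fun x y => hM x y⟩, hc.preimage_val⟩

lemma IsPartialTranslation.matRestrict {v : X → X → ℂ} (hv : IsPartialTranslation v) :
    IsPartialTranslation (matRestrict x₀ v) :=
  ⟨fun x y => hv.1 x y, fun x y y' h h' => Subtype.ext (hv.2.1 x y y' h h'),
    fun x x' y h h' => Subtype.ext (hv.2.2.1 x x' y h h'), hv.2.2.2.preimage_val⟩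

/-- Restriction is multiplicative because a controlled matrix has no entries linking
different coarse components. -/
lemma matRestrict_matMul {T : X → X → ℂ} (hT : Controlled (matSupport T))
    (S : X → X → ℂ) :
    matRestrict x₀ (matMul T S) = matMul (matRestrict x₀ T) (matRestrict x₀ S) := by
  funext x y
  refine (tsum_subtype_eq_of_support_subset (s := {z | edist x₀ z < ⊤}) fun z hz => ?_).symm
  exact (hT.edist_lt_top_iff (p := (x.1, z)) (left_ne_zero_of_mul hz)).1 x.2

lemma matRestrict_matStar (T : X → X → ℂ) :
    matRestrict x₀ (matStar T) = matStar (matRestrict x₀ T) :=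
  rfl

lemma matRestrict_matOne : matRestrict x₀ (matOne : X → X → ℂ) = matOne := by
  funext x y
  simp [matRestrict, matOne, Subtype.ext_iff]

lemma matRestrict_matExtendByZero (S : CoarseComponent x₀ → CoarseComponent x₀ → ℂ) :
    matRestrict x₀ (matExtendByZero x₀ S) = S := by
  funext x y
  simp [matRestrict, matExtendByZero, x.2, y.2]

lemma matExtendByZero_eq_one {S : CoarseComponent x₀ → CoarseComponent x₀ → ℂ} {x y : X}
    (h : matExtendByZero x₀ S x y = 1) :
    ∃ (hx : edist x₀ x < ⊤) (hy : edist x₀ y < ⊤), S ⟨x, hx⟩ ⟨y, hy⟩ = 1 := by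
  unfold matExtendByZero at h
  split_ifs at h with hxy
  exacts [⟨hxy.1, hxy.2, h⟩, absurd h zero_ne_one]

lemma IsPartialTranslation.matExtendByZero
    {w : CoarseComponent x₀ → CoarseComponent x₀ → ℂ} (hw : IsPartialTranslation w) :
    IsPartialTranslation (matExtendByZero x₀ w) := by
  refine ⟨fun x y => ?_, fun x y y' h h' => ?_, fun x x' y h h' => ?_, ?_⟩
  · unfold GeomPropT.matExtendByZero
    split_ifs
    exacts [hw.1 _ _, Or.inl rfl]
  · obtain ⟨hx, hy, hw₁⟩ := matExtendByZero_eq_one h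
    obtain ⟨_, hy', hw₂⟩ := matExtendByZero_eq_one h'
    exact congrArg Subtype.val (hw.2.1 ⟨x, hx⟩ ⟨y, hy⟩ ⟨y', hy'⟩ hw₁ hw₂)
  · obtain ⟨hx, hy, hw₁⟩ := matExtendByZero_eq_one h
    obtain ⟨hx', _, hw₂⟩ := matExtendByZero_eq_one h'
    exact congrArg Subtype.val (hw.2.2.1 ⟨x, hx⟩ ⟨x', hx'⟩ ⟨y, hy⟩ hw₁ hw₂)
  · obtain ⟨R, hR, hs⟩ := hw.2.2.2
    refine ⟨R, hR, fun p hp => ?_⟩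
    change GeomPropT.matExtendByZero x₀ w p.1 p.2 ≠ 0 at hp
    unfold GeomPropT.matExtendByZero at hp
    split_ifs at hp with h
    exacts [hs (show (⟨p.1, h.1⟩, ⟨p.2, h.2⟩) ∈ matSupport w from hp), absurd rfl hp]

section Representation

variable {H : Type*} [NormedAddCommGroup H] [InnerProductSpace ℂ H]
  {π₀ : (CoarseComponent x₀ → CoarseComponent x₀ → ℂ) → (H →L[ℂ] H)}

lemma IsRepresentation.comp_matRestrict [CompleteSpace H] (hπ₀ : IsRepresentation π₀) :
    IsRepresentation fun T : X → X → ℂ => π₀ (matRestrict x₀ T) where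
  map_one := by simp only [matRestrict_matOne, hπ₀.map_one]
  map_add T S hT hS := hπ₀.map_add _ _ hT.matRestrict hS.matRestrict
  map_smul c T hT := hπ₀.map_smul c _ hT.matRestrict
  map_mul T S hT hS := by
    simp only [matRestrict_matMul hT.2, hπ₀.map_mul _ _ hT.matRestrict hS.matRestrict]
  map_star T hT := hπ₀.map_star _ hT.matRestrict

lemma invariantSubmodule_comp_matRestrict :
    invariantSubmodule (fun T : X → X → ℂ => π₀ (matRestrict x₀ T)) =
      invariantSubmodule π₀ := by
  ext ξ
  constructor
  · intro hξ w hw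
    simpa only [matRestrict_matMul hw.matExtendByZero.2.2.2, matRestrict_matStar,
      matRestrict_matExtendByZero] using hξ _ hw.matExtendByZero
  · intro hξ v hv
    change π₀ (matRestrict x₀ v) ξ = π₀ (matRestrict x₀ (matMul v (matStar v))) ξ
    rw [matRestrict_matMul hv.2.2.2, matRestrict_matStar]
    exact hξ _ hv.matRestrict

end Representation

/-- A generating set of the component lifts to a generating set of `X`: add the diagonal
(so that powers increase) and the part of a generating set of `X` that lives outside the
component. -/
lemma Generating.exists_lift (hX : Monogenic X)
    {E : Set (CoarseComponent x₀ × CoarseComponent x₀)} (hE : Generating E) :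
    ∃ E' : Set (X × X), Generating E' ∧
      Prod.map Subtype.val Subtype.val ⁻¹' E' ⊆ E ∪ Set.diagonal (CoarseComponent x₀) := by
  obtain ⟨F, hF⟩ := hX
  set outside := {q ∈ F | ¬ edist x₀ q.1 < ⊤}
  set E' := Prod.map Subtype.val Subtype.val '' E ∪ (outside ∪ Set.diagonal X)
  refine ⟨E', ⟨?_, ?_⟩, ?_⟩
  · exact hE.1.image_val.union ((hF.1.subset fun q hq => hq.1).union controlled_diagonal)
  · intro G hG
    obtain ⟨m, hm⟩ := hF.2 G hG
    obtain ⟨n, hn⟩ := hE.2 _ hG.preimage_val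
    have hdiag : Set.diagonal X ⊆ E' := Set.subset_union_right.trans Set.subset_union_right
    refine ⟨max n m, fun p hp => ?_⟩
    by_cases hp₁ : edist x₀ p.1 < ⊤
    · have hp₂ := (hG.edist_lt_top_iff hp).1 hp₁
      have :=
        image_compPow_subset Subtype.val E n ⟨(⟨p.1, hp₁⟩, ⟨p.2, hp₂⟩), hn hp, rfl⟩
      exact compPow_mono_index hdiag (le_max_left n m)
        (compPow_mono Set.subset_union_left n this)
    · have := compPow_subset_restrict (S := {x | ¬ edist x₀ x < ⊤})
        (fun q hq => mt (hF.1.edist_lt_top_iff hq).2) m p (hm hp) hp₁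
      exact compPow_mono_index hdiag (le_max_right n m)
        (compPow_mono (Set.subset_union_left.trans Set.subset_union_right) m this)
  · rintro q (⟨q', hq', hq⟩ | ⟨-, hq⟩ | hq)
    · exact Or.inl (Subtype.val_injective.prodMap Subtype.val_injective hq ▸ hq')
    · exact absurd q.1.2 hq
    · exact Or.inr (Subtype.ext hq)

end CoarseComponent

/-- If a space `X` has Property (T), then so does every coarse
component `X₀` of `X` (with the restricted metric). -/
theorem statement2 {X : Type*} [EMetricSpace X] (hX : IsSpace X) (hT : HasPropertyT X)
    (x₀ : X) : HasPropertyT {y : X // edist x₀ y < ⊤} := by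
  intro E hE
  obtain ⟨E', hE', hE'E⟩ := hE.exists_lift hX.monogenic
  obtain ⟨c, hc, hgap⟩ := hT E' hE'
  refine ⟨c, hc, fun H _ _ _ π₀ hπ₀ ξ hξ => ?_⟩
  rw [← invariantSubmodule_comp_matRestrict] at hξ
  obtain ⟨v, hv, hvE', hvξ⟩ := hgap H _ hπ₀.comp_matRestrict ξ hξ
  -- The diagonal of the restricted translation may leave `E`, but it does not move `ξ`.
  refine ⟨offDiag (matRestrict x₀ v), hv.matRestrict.offDiag, ?_, ?_⟩
  · rw [matSupport_offDiag, matSupport_matRestrict]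
    exact fun q ⟨hq, hq'⟩ => (hE'E (hvE' hq)).resolve_right hq'
  · rwa [← sub_apply, ← hπ₀.sub_eq_offDiag hv.matRestrict,
      ← matRestrict_matStar, ← matRestrict_matMul hv.2.2.2]

end GeomPropT
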